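/- arXiv:2412.19503 — 5 statements merged into one kernel-verified Lean document; each statement's English description precedes it below -/
import Mathlib

section
/- For all nonnegative integers n and r, the number of partitions of n whose smallest odd positive integer not appearing as a part equals 2r+1 is equal to the coefficient of q^n in q^{r^2}/∏_{m≥1, m≠2r+1}(1-q^m). -/
open PowerSeries Finset

noncomputable def qPoch (n : ℕ) : PowerSeries ℚ :=
  ∏ k ∈ Finset.range n, (1 - (X : PowerSeries ℚ) ^ (k + 1))

noncomputable def gauss (L : ℕ) (s : ℤ) : PowerSeries ℚ :=
  if 0 ≤ s ∧ s ≤ (L : ℤ) then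
    qPoch L * (qPoch s.toNat)⁻¹ * (qPoch (L - s.toNat))⁻¹
  else 0
/-- The smallest positive odd integer that is not a part of `p`. -/
noncomputable def mexOdd {n : ℕ} (p : n.Partition) : ℕ :=
  sInf {m : ℕ | m % 2 = 1 ∧ m ∉ p.parts}

/-- The smallest positive even integer that is not a part of `p`. -/
noncomputable def mexEven {n : ℕ} (p : n.Partition) : ℕ :=
  sInf {m : ℕ | 0 < m ∧ m % 2 = 0 ∧ m ∉ p.parts}

/-! A partition has `mexOdd = 2r+1` exactly when it contains each of `1, 3, …, 2r-1` but not
`2r+1`. Removing one copy of each of these odd parts, whose sum is `r²`, is a bijection onto the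
partitions of `n - r²` without the part `2r+1`, and these are counted by
`∏_{m ≠ 2r+1} (1 - q^m)⁻¹`. No part of such a partition exceeds `n`, so the product may stop
at `m = n`. -/

namespace Nat.Partition

theorem sum_le_of_le_parts {n : ℕ} {D : Multiset ℕ} (p : n.Partition) (h : D ≤ p.parts) :
    D.sum ≤ n := by
  obtain ⟨u, hu⟩ := Multiset.le_iff_exists_add.1 h
  rw [← p.parts_sum, hu, Multiset.sum_add]
  exact Nat.le_add_right _ _

def removePartsEquiv {n : ℕ} (D : Multiset ℕ) (hD : ∀ i ∈ D, 0 < i) (hn : D.sum ≤ n) :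
    {p : n.Partition // D ≤ p.parts} ≃ (n - D.sum).Partition where
  toFun p :=
    { parts := p.1.parts - D
      parts_pos := fun hi ↦ p.1.parts_pos (Multiset.mem_of_le (Multiset.sub_le_self _ _) hi)
      parts_sum := by
        have := congrArg Multiset.sum (tsub_add_cancel_of_le p.2)
        rw [Multiset.sum_add, p.1.parts_sum] at this
        omega }
  invFun q :=
    ⟨{ parts := q.parts + D
       parts_pos := fun hi ↦ (Multiset.mem_add.1 hi).elim q.parts_pos (hD _)
       parts_sum := by rw [Multiset.sum_add, q.parts_sum]; omega },
     Multiset.le_add_left _ _⟩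
  left_inv p := Subtype.ext (Nat.Partition.ext (tsub_add_cancel_of_le p.2))
  right_inv q := Nat.Partition.ext (add_tsub_cancel_right _ _)

@[simp]
theorem removePartsEquiv_apply_parts {n : ℕ} {D : Multiset ℕ} (hD : ∀ i ∈ D, 0 < i)
    (hn : D.sum ≤ n) (p : {p : n.Partition // D ≤ p.parts}) :
    (removePartsEquiv D hD hn p).parts = p.1.parts - D :=
  rfl

open PowerSeries.WithPiTopology in
theorem coeff_inv_prod_one_sub_X_pow {K : Type*} [Field K] {s : Finset ℕ} (hs : 0 ∉ s)
    (n : ℕ) : coeff n (∏ i ∈ s, (1 - X ^ i : K⟦X⟧))⁻¹ = #(restricted n (· ∈ s)) := by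
  -- The product formula for `restricted` is a `HasProd` statement; any Hausdorff topology on `K`
  -- will do, and the resulting identity of power series does not depend on it.
  let _ : TopologicalSpace K := ⊥
  have _ : DiscreteTopology K := ⟨rfl⟩
  have hX : ∀ i ∈ s, constantCoeff (X ^ i : K⟦X⟧) = 0 := fun i hi ↦ by
    simp [ne_of_mem_of_not_mem hi hs]
  have hinv : (∏ i ∈ s, (1 - X ^ i : K⟦X⟧))⁻¹ = ∏ i ∈ s, ∑' j, (X : K⟦X⟧) ^ (i * j) := by
    refine ((PowerSeries.eq_inv_iff_mul_eq_one ?_).2 ?_).symm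
    · rw [map_prod]
      exact prod_ne_zero_iff.2 fun i hi ↦ by simp [hX i hi]
    · rw [← prod_mul_distrib]
      refine prod_eq_one fun i hi ↦ ?_
      simp_rw [pow_mul]
      exact tsum_pow_mul_one_sub_of_constantCoeff_eq_zero (hX i hi)
  let g : ℕ → K⟦X⟧ := fun i ↦ if i ∈ s then ∑' j, X ^ (i * j) else 1
  have hg : HasProd g (∏ i ∈ s, ∑' j, (X : K⟦X⟧) ^ (i * j)) := by
    rw [← prod_congr rfl fun i hi ↦ if_pos hi]
    exact hasProd_prod_of_ne_finset_one fun i hi ↦ if_neg hi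
  have hg_succ : HasProd (g ∘ Nat.succ) (∏ i ∈ s, ∑' j, (X : K⟦X⟧) ^ (i * j)) := by
    refine (Nat.succ_injective.hasProd_iff fun i hi ↦ ?_).2 hg
    obtain rfl : i = 0 := by simpa using hi
    exact if_neg hs
  rw [hinv, ← (hasProd_powerSeriesMk_card_restricted K (· ∈ s)).unique hg_succ, coeff_mk]

theorem card_restricted_mem_erase_Icc {m n a : ℕ} (hm : m ≤ n) :
    #(restricted m (· ∈ (Icc 1 n).erase a)) = Nat.card {q : m.Partition // a ∉ q.parts} := by
  rw [Nat.card_eq_fintype_card, Fintype.card_subtype, restricted]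
  congr 1
  ext q
  simp only [mem_filter, mem_univ, true_and, mem_erase, mem_Icc]
  refine ⟨fun h ha ↦ (h a ha).1 rfl, fun h i hi ↦ ⟨?_, q.parts_pos hi, ?_⟩⟩
  · rintro rfl; exact h hi
  · exact (q.le_of_mem_parts hi).trans hm

end Nat.Partition

def firstOdds (r : ℕ) : Multiset ℕ :=
  (Multiset.range r).map (2 * · + 1)

theorem mem_firstOdds {r m : ℕ} : m ∈ firstOdds r ↔ ∃ k < r, 2 * k + 1 = m := by
  simp [firstOdds]

theorem nodup_firstOdds (r : ℕ) : (firstOdds r).Nodup :=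
  (Multiset.nodup_range r).map fun _ _ h ↦ by omega

theorem sum_firstOdds (r : ℕ) : (firstOdds r).sum = r ^ 2 := by
  induction r with
  | zero => rfl
  | succ r ih =>
    rw [firstOdds, Multiset.range_succ, Multiset.map_cons, Multiset.sum_cons, ← firstOdds, ih]
    ring

theorem mexOdd_eq_iff {n : ℕ} (p : n.Partition) (r : ℕ) :
    mexOdd p = 2 * r + 1 ↔ firstOdds r ≤ p.parts ∧ 2 * r + 1 ∉ p.parts := by
  have hS : {m | m % 2 = 1 ∧ m ∉ p.parts}.Nonempty :=
    ⟨2 * n + 1, by omega, fun h ↦ by have := p.le_of_mem_parts h; omega⟩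
  simp only [Multiset.le_iff_subset (nodup_firstOdds r), Multiset.subset_iff, mem_firstOdds,
    forall_exists_index, and_imp, forall_apply_eq_imp_iff₂]
  rw [mexOdd]
  constructor
  · intro h
    refine ⟨fun k hk ↦ ?_, (h ▸ Nat.sInf_mem hS).2⟩
    by_contra hk'
    exact Nat.notMem_of_lt_sInf (s := {m | m % 2 = 1 ∧ m ∉ p.parts}) (m := 2 * k + 1)
      (by omega) ⟨by omega, hk'⟩
  · rintro ⟨hD, h⟩
    refine IsLeast.csInf_eq ⟨⟨by omega, h⟩, fun m ⟨hodd, hnot⟩ ↦ ?_⟩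
    by_contra hlt
    have hm : 2 * (m / 2) + 1 = m := by omega
    exact hnot (hm ▸ hD _ (by omega))

theorem sq_le_of_mexOdd_eq {n r : ℕ} {p : n.Partition} (h : mexOdd p = 2 * r + 1) : r ^ 2 ≤ n :=
  sum_firstOdds r ▸ p.sum_le_of_le_parts ((mexOdd_eq_iff p r).1 h).1

theorem card_mexOdd_eq {n r : ℕ} (h : r ^ 2 ≤ n) :
    Nat.card {p : n.Partition // mexOdd p = 2 * r + 1} =
      Nat.card {q : (n - r ^ 2).Partition // 2 * r + 1 ∉ q.parts} := by
  have hpos : ∀ i ∈ firstOdds r, 0 < i := fun i hi ↦ by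
    obtain ⟨k, -, rfl⟩ := mem_firstOdds.1 hi; omega
  have hnot : 2 * r + 1 ∉ firstOdds r := fun hr ↦ by
    obtain ⟨k, hk, hkr⟩ := mem_firstOdds.1 hr; omega
  rw [← sum_firstOdds r] at h ⊢
  calc Nat.card {p : n.Partition // mexOdd p = 2 * r + 1}
      = Nat.card {p : {p : n.Partition // firstOdds r ≤ p.parts} // 2 * r + 1 ∉ p.1.parts} :=
        Nat.card_congr ((Equiv.subtypeEquivRight fun p ↦ mexOdd_eq_iff p r).trans
          (Equiv.subtypeSubtypeEquivSubtypeInter _ _).symm)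
    _ = _ := Nat.card_congr <| Equiv.subtypeEquiv (Nat.Partition.removePartsEquiv _ hpos h)
        fun p ↦ by
          simp [← Multiset.count_eq_zero, Multiset.count_sub, Multiset.count_eq_zero.2 hnot]

/-- The number of partitions of `n` whose smallest odd positive non-part equals `2r+1`
equals the coefficient of `q^n` in `q^{r²} / ∏_{m ≥ 1, m ≠ 2r+1} (1 - q^m)`. -/
theorem stmt0 (n r : ℕ) :
    (Nat.card {p : n.Partition // mexOdd p = 2 * r + 1} : ℚ) =
      PowerSeries.coeff (R := ℚ) n ((X : PowerSeries ℚ) ^ (r ^ 2) *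
        (∏ m ∈ (Finset.Icc 1 n).erase (2 * r + 1),
          (1 - (X : PowerSeries ℚ) ^ m))⁻¹) := by
  rw [coeff_X_pow_mul', Nat.Partition.coeff_inv_prod_one_sub_X_pow (by simp)]
  split_ifs with h
  · rw [Nat.Partition.card_restricted_mem_erase_Icc (Nat.sub_le n _), card_mexOdd_eq h]
  · have : IsEmpty {p : n.Partition // mexOdd p = 2 * r + 1} :=
      ⟨fun p ↦ h (sq_le_of_mexOdd_eq p.2)⟩
    simp
end

section
/- As formal power series in q, the identity ∑_{n≥r} q^{n^2} / ((q;q)_{n-r} (q;q)_{n+r}) = q^{r^2} / (q;q)_∞ holds for every nonnegative integer r. -/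
open PowerSeries Finset

/-!
The q-Vandermonde identity
`[2N+d, N] = ∑_{j ≤ N} q^{j(d+j)} [N+d, N-j] [N, j]`
holds for Gaussian binomials. Since `(q;q)_b ≡ (q;q)_a mod q^{a+1}` whenever `a ≤ b`, reducing it
modulo `q^{N+1}` turns the left side into `1/(q;q)_N` and the `j`-th summand into
`q^{j(d+j)}/((q;q)_j (q;q)_{d+j})`. For `d = 2r`, the substitution `n = r + j`
(`n² = r² + j(2r+j)`) gives the coefficient of `q^N` in the identity.
-/

section SpanXPow

variable {R : Type*} [CommRing R] {f g : R⟦X⟧} {m n : ℕ}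

theorem SModEq.of_span_X_pow_le (hmn : m ≤ n) (h : f ≡ g [SMOD Ideal.span {(X : R⟦X⟧) ^ n}]) :
    f ≡ g [SMOD Ideal.span {(X : R⟦X⟧) ^ m}] :=
  h.mono (Ideal.span_singleton_le_span_singleton.mpr (pow_dvd_pow X hmn))

theorem SModEq.X_pow_mul (e : ℕ) (h : f ≡ g [SMOD Ideal.span {(X : R⟦X⟧) ^ n}]) :
    X ^ e * f ≡ X ^ e * g [SMOD Ideal.span {(X : R⟦X⟧) ^ (e + n)}] := by
  rw [SModEq.sub_mem, Ideal.mem_span_singleton] at h ⊢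
  rw [← mul_sub, pow_add]
  exact mul_dvd_mul_left _ h

theorem SModEq.coeff_eq (h : f ≡ g [SMOD Ideal.span {(X : R⟦X⟧) ^ n}]) (hm : m < n) :
    coeff m f = coeff m g := by
  rw [SModEq.sub_mem, Ideal.mem_span_singleton, X_pow_dvd_iff] at h
  simpa [sub_eq_zero] using h m hm

end SpanXPow

theorem constantCoeff_qPoch (n : ℕ) : constantCoeff (qPoch n) = 1 := by
  simp [qPoch, map_prod]

theorem qPoch_mul_inv (n : ℕ) : qPoch n * (qPoch n)⁻¹ = 1 :=
  PowerSeries.mul_inv_cancel _ (by simp [constantCoeff_qPoch])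

theorem qPoch_ne_zero (n : ℕ) : qPoch n ≠ 0 := fun h ↦ by
  simpa [h] using constantCoeff_qPoch n

@[simp]
theorem qPoch_zero : qPoch 0 = 1 := by simp [qPoch]

theorem qPoch_succ (n : ℕ) : qPoch (n + 1) = qPoch n * (1 - X ^ (n + 1)) := by
  simp [qPoch, Finset.prod_range_succ]

theorem qPoch_smodEq_of_le {a b : ℕ} (h : a ≤ b) :
    qPoch b ≡ qPoch a [SMOD Ideal.span {(X : ℚ⟦X⟧) ^ (a + 1)}] := by
  have hfactor : ∀ k ∈ Ico a b, 1 - X ^ (k + 1) ≡ 1 [SMOD Ideal.span {(X : ℚ⟦X⟧) ^ (a + 1)}] :=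
    fun k hk ↦ by
      rw [SModEq.sub_mem, sub_sub_cancel_left, neg_mem_iff, Ideal.mem_span_singleton]
      exact pow_dvd_pow X (by rw [mem_Ico] at hk; omega)
  calc qPoch b = qPoch a * ∏ k ∈ Ico a b, (1 - X ^ (k + 1)) := by
        rw [qPoch, qPoch, prod_range_mul_prod_Ico _ h]
    _ ≡ qPoch a * ∏ k ∈ Ico a b, 1 [SMOD Ideal.span {(X : ℚ⟦X⟧) ^ (a + 1)}] :=
        SModEq.rfl.mul (SModEq.prod hfactor)
    _ = qPoch a := by simp

-- `gauss` at a natural lower index, which keeps `Int.toNat` out of the index arithmetic.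
noncomputable def qBinom (L a : ℕ) : ℚ⟦X⟧ := gauss L a

theorem qBinom_add_left (a b : ℕ) :
    qBinom (a + b) a = qPoch (a + b) * (qPoch a)⁻¹ * (qPoch b)⁻¹ := by
  simp [qBinom, gauss]

theorem qBinom_add_right (a b : ℕ) :
    qBinom (a + b) b = qPoch (a + b) * (qPoch a)⁻¹ * (qPoch b)⁻¹ := by
  rw [add_comm a b, qBinom_add_left, add_comm]; ring

theorem qBinom_add_mul_qPoch_mul_qPoch (a b : ℕ) :
    qBinom (a + b) a * (qPoch a * qPoch b) = qPoch (a + b) := by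
  rw [qBinom_add_left]
  linear_combination qPoch (a + b) * (qPoch a * (qPoch a)⁻¹) * qPoch_mul_inv b
    + qPoch (a + b) * qPoch_mul_inv a

theorem qBinom_of_lt {L a : ℕ} (h : L < a) : qBinom L a = 0 := by
  simp [qBinom, gauss, h.not_ge]

@[simp]
theorem qBinom_zero_right (L : ℕ) : qBinom L 0 = 1 := by
  simpa [qPoch_mul_inv] using qBinom_add_right L 0

@[simp]
theorem qBinom_self (L : ℕ) : qBinom L L = 1 := by
  simpa [qPoch_mul_inv] using qBinom_add_left L 0

theorem qBinom_add_add_two (a b : ℕ) :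
    qBinom (a + b + 2) (a + 1) =
      X ^ (b + 1) * qBinom (a + b + 1) a + qBinom (a + b + 1) (a + 1) := by
  refine mul_right_cancel₀ (mul_ne_zero (qPoch_ne_zero (a + 1)) (qPoch_ne_zero (b + 1))) ?_
  have h₀ := qBinom_add_mul_qPoch_mul_qPoch (a + 1) (b + 1)
  have h₁ := qBinom_add_mul_qPoch_mul_qPoch a (b + 1)
  have h₂ := qBinom_add_mul_qPoch_mul_qPoch (a + 1) b
  rw [show a + 1 + (b + 1) = a + b + 2 by ring, qPoch_succ (a + b + 1)] at h₀
  rw [show a + (b + 1) = a + b + 1 by ring] at h₁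
  rw [show a + 1 + b = a + b + 1 by ring] at h₂
  rw [qPoch_succ a] at h₀ h₂ ⊢
  rw [qPoch_succ b] at h₀ h₁ ⊢
  linear_combination h₀ - X ^ (b + 1) * (1 - X ^ (a + 1)) * h₁ - (1 - X ^ (b + 1)) * h₂

theorem qBinom_succ_succ (L a : ℕ) :
    qBinom (L + 1) (a + 1) = X ^ (L - a) * qBinom L a + qBinom L (a + 1) := by
  rcases lt_trichotomy a L with h | rfl | h
  · obtain ⟨b, rfl⟩ := Nat.exists_eq_add_of_lt h
    rw [qBinom_add_add_two, show a + b + 1 - a = b + 1 by omega]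
  · simp [qBinom_of_lt]
  · simp [qBinom_of_lt, h, h.trans (Nat.lt_succ_self a)]

theorem X_pow_succ_mul_X_pow_sub_mul_qBinom (n i : ℕ) :
    X ^ (i + 1) * (X ^ (n - i) * qBinom n i) = X ^ (n + 1) * qBinom n i := by
  rcases le_or_gt i n with h | h
  · rw [← mul_assoc, ← pow_add, show i + 1 + (n - i) = n + 1 by omega]
  · simp [qBinom_of_lt h]

theorem qBinom_vandermonde (n : ℕ) : ∀ k d : ℕ, qBinom (k + d + n) k =
    ∑ j ∈ range (k + 1), X ^ (j * (d + j)) * qBinom (k + d) (k - j) * qBinom n j := by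
  induction n with
  | zero =>
    intro k d
    simp [Finset.sum_range_succ', qBinom_of_lt]
  | succ n ih =>
    rintro (_ | k) d
    · simp
    -- Pascal's rule on `[n+1, i+1]`: the first half of each summand is a summand of `ih k (d + 1)`.
    have hterm : ∀ i ∈ range (k + 1),
        X ^ ((i + 1) * (d + (i + 1))) * qBinom (k + 1 + d) (k + 1 - (i + 1)) *
            qBinom (n + 1) (i + 1) =
          X ^ (d + n + 1) * (X ^ (i * (d + 1 + i)) * qBinom (k + (d + 1)) (k - i) * qBinom n i) +
          X ^ ((i + 1) * (d + (i + 1))) * qBinom (k + 1 + d) (k + 1 - (i + 1)) *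
            qBinom n (i + 1) := by
      intro i _
      rw [qBinom_succ_succ n i, show k + 1 + d = k + (d + 1) by ring,
        show k + 1 - (i + 1) = k - i by omega]
      linear_combination X ^ (i * (d + 1 + i)) * X ^ d * qBinom (k + (d + 1)) (k - i) *
        X_pow_succ_mul_X_pow_sub_mul_qBinom n i
    rw [show k + 1 + d + (n + 1) = k + d + n + 1 + 1 by ring, qBinom_succ_succ,
      show k + d + n + 1 - k = d + n + 1 by omega, sum_range_succ', sum_congr rfl hterm,
      sum_add_distrib, ← mul_sum, show k + d + n + 1 = k + (d + 1) + n by ring, ← ih,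
      show k + (d + 1) + n = k + 1 + d + n by ring, ih, sum_range_succ' _ (k + 1)]
    simp only [qBinom_zero_right]
    ring

theorem qPoch_add_mul_inv_mul_inv_smodEq (a b : ℕ) :
    qPoch (a + b) * (qPoch a)⁻¹ * (qPoch b)⁻¹ ≡ (qPoch a)⁻¹
      [SMOD Ideal.span {(X : ℚ⟦X⟧) ^ (b + 1)}] :=
  calc qPoch (a + b) * (qPoch a)⁻¹ * (qPoch b)⁻¹
      ≡ qPoch b * (qPoch a)⁻¹ * (qPoch b)⁻¹ [SMOD Ideal.span {(X : ℚ⟦X⟧) ^ (b + 1)}] :=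
        ((qPoch_smodEq_of_le (Nat.le_add_left b a)).mul SModEq.rfl).mul SModEq.rfl
    _ = (qPoch a)⁻¹ := by linear_combination (qPoch a)⁻¹ * qPoch_mul_inv b

theorem sum_X_pow_mul_inv_qPoch_mul_inv_qPoch_smodEq (d N : ℕ) :
    ∑ j ∈ range (N + 1), X ^ (j * (d + j)) * (qPoch j)⁻¹ * (qPoch (d + j))⁻¹ ≡ (qPoch N)⁻¹
      [SMOD Ideal.span {(X : ℚ⟦X⟧) ^ (N + 1)}] := by
  have hbinom : qBinom (N + d + N) N ≡ (qPoch N)⁻¹ [SMOD Ideal.span {(X : ℚ⟦X⟧) ^ (N + 1)}] := by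
    have h := qPoch_add_mul_inv_mul_inv_smodEq N (d + N)
    rw [← qBinom_add_left, ← add_assoc] at h
    exact h.of_span_X_pow_le (show N + 1 ≤ d + N + 1 by omega)
  have hterm : ∀ j ∈ range (N + 1),
      X ^ (j * (d + j)) * qBinom (N + d) (N - j) * qBinom N j ≡
        X ^ (j * (d + j)) * (qPoch j)⁻¹ * (qPoch (d + j))⁻¹
        [SMOD Ideal.span {(X : ℚ⟦X⟧) ^ (N + 1)}] := by
    intro j hj
    have hjN : j ≤ N := Nat.lt_succ_iff.mp (mem_range.mp hj)
    have h₁ : qBinom (N + d) (N - j) ≡ (qPoch (d + j))⁻¹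
        [SMOD Ideal.span {(X : ℚ⟦X⟧) ^ (N - j + 1)}] := by
      rw [show N + d = d + j + (N - j) by omega, qBinom_add_right]
      exact qPoch_add_mul_inv_mul_inv_smodEq _ _
    have h₂ : qBinom N j ≡ (qPoch j)⁻¹ [SMOD Ideal.span {(X : ℚ⟦X⟧) ^ (N - j + 1)}] := by
      have h := qPoch_add_mul_inv_mul_inv_smodEq j (N - j)
      rwa [← qBinom_add_left, Nat.add_sub_cancel' hjN] at h
    have hexp : j ≤ j * (d + j) :=
      (Nat.le_mul_self j).trans (Nat.mul_le_mul_left j (Nat.le_add_left j d))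
    calc X ^ (j * (d + j)) * qBinom (N + d) (N - j) * qBinom N j
        = X ^ (j * (d + j)) * (qBinom (N + d) (N - j) * qBinom N j) := mul_assoc _ _ _
      _ ≡ X ^ (j * (d + j)) * ((qPoch (d + j))⁻¹ * (qPoch j)⁻¹)
          [SMOD Ideal.span {(X : ℚ⟦X⟧) ^ (N + 1)}] :=
        ((h₁.mul h₂).X_pow_mul _).of_span_X_pow_le (by omega)
      _ = X ^ (j * (d + j)) * (qPoch j)⁻¹ * (qPoch (d + j))⁻¹ := by ring
  rw [qBinom_vandermonde] at hbinom
  exact (SModEq.sum hterm).symm.trans hbinom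

/-- Coefficientwise form: terms with `n > N + r` and factors `1 - q^k` with `k > N` do not
affect the coefficient of `q^N`. -/
theorem stmt2 (r : ℕ) : ∀ N : ℕ,
    PowerSeries.coeff (R := ℚ) N (∑ n ∈ Finset.Icc r (N + r),
        (X : PowerSeries ℚ) ^ (n ^ 2) * (qPoch (n - r))⁻¹ * (qPoch (n + r))⁻¹) =
      PowerSeries.coeff (R := ℚ) N ((X : PowerSeries ℚ) ^ (r ^ 2) * (qPoch N)⁻¹) := by
  intro N
  have hshift :
      ∑ n ∈ Icc r (N + r), (X : ℚ⟦X⟧) ^ (n ^ 2) * (qPoch (n - r))⁻¹ * (qPoch (n + r))⁻¹ =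
      X ^ (r ^ 2) * ∑ j ∈ range (N + 1),
        X ^ (j * (2 * r + j)) * (qPoch j)⁻¹ * (qPoch (2 * r + j))⁻¹ := by
    rw [mul_sum, ← Ico_add_one_right_eq_Icc, sum_Ico_eq_sum_range,
      show N + r + 1 - r = N + 1 by omega]
    refine sum_congr rfl fun j _ ↦ ?_
    rw [show r + j - r = j by omega, show r + j + r = 2 * r + j by omega,
      show (r + j) ^ 2 = r ^ 2 + j * (2 * r + j) by ring, pow_add, mul_assoc, mul_assoc, mul_assoc]
  rw [hshift]
  exact ((sum_X_pow_mul_inv_qPoch_mul_inv_qPoch_smodEq (2 * r) N).X_pow_mul (r ^ 2)).coeff_eq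
    (by omega)
end

section
/- For every integer L ≥ 2 and integers r, s with 0 ≤ s ≤ ⌊L/2⌋ - 1 and 0 ≤ r ≤ s, there exists a bijection between {η ∈ {0,1}^L : |η| = s, ε₁(η) = r} and {η ∈ {0,1}^L : |η| = s+1, ε₁(η) = r+1} which preserves the energy E(η) = ∑_{j=1}^{L-1} j·[η_j = 0 and η_{j+1} = 1]. -/
/-- Extension of a finite binary sequence to `ℕ` by `false`. -/
def ext (L : ℕ) (η : Fin L → Bool) (j : ℕ) : Bool :=
  if h : j < L then η ⟨j, h⟩ else false

/-- The energy `E(η) = ∑_{j=1}^{L-1} j · [η_j = 0 ∧ η_{j+1} = 1]` (1-based). -/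
def energy (L : ℕ) (η : Fin L → Bool) : ℕ :=
  ∑ j ∈ Finset.range (L - 1),
    if ext L η j = false ∧ ext L η (j + 1) = true then j + 1 else 0

/-- The number of ones in the binary sequence. -/
def ones (L : ℕ) (η : Fin L → Bool) : ℕ :=
  ∑ i : Fin L, if η i = true then 1 else 0

/-- The path encoding: `S_0 = 0`, `S_i = S_{i-1} + 1 - 2 η_i`. -/
def pathS (L : ℕ) (η : Fin L → Bool) (i : ℕ) : ℤ :=
  ∑ j ∈ Finset.range i, (1 - 2 * (if ext L η j = true then 1 else 0))

/-- `ε₁(η) = - min_{0 ≤ i ≤ L} S_i(η)`. -/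
def eps1 (L : ℕ) (η : Fin L → Bool) : ℤ :=
  - (Finset.range (L + 1)).inf' ⟨0, Finset.mem_range.mpr (Nat.succ_pos L)⟩ (pathS L η)

/-!
The minimum of the path `S(η)` is `-ε₁(η)`. Since `|η| ≤ L/2 - 1` the path ends at `L - 2|η| ≥ 2`,
so after the last time it attains its minimum it takes two up-steps (or stops after one). Turning
the first of these `0`s into a `1` lowers the rest of the path by `2`: the new minimum is
`-ε₁(η) - 1`, attained for the first time one step later. Conversely, turning the `1` just before
the first minimum of a path into a `0` raises the rest of the path by `2`, and the two operations are
mutually inverse. The flipped letter is preceded by a `1` and followed by a `0`, so no ascent `01`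
appears or disappears and the energy is unchanged.
-/

def flipAt (L : ℕ) (η : Fin L → Bool) (k : ℕ) : Fin L → Bool :=
  fun i => if (i : ℕ) = k then !η i else η i

section Flip

variable {L : ℕ} (η : Fin L → Bool)

theorem lt_of_ext_eq_true {j : ℕ} (h : ext L η j = true) : j < L := by
  by_contra hj
  simp [ext, hj] at h

theorem ext_flipAt {k : ℕ} (hk : k < L) (j : ℕ) :
    ext L (flipAt L η k) j = if j = k then !ext L η j else ext L η j := by
  by_cases hj : j < L
  · simp [ext, flipAt, hj]
  · simp [ext, hj, show j ≠ k by omega]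

theorem flipAt_flipAt (k : ℕ) : flipAt L (flipAt L η k) k = η := by
  funext i
  by_cases h : (i : ℕ) = k <;> simp [flipAt, h]

theorem pathS_zero : pathS L η 0 = 0 := by
  simp [pathS]

theorem pathS_succ_of_true {i : ℕ} (h : ext L η i = true) :
    pathS L η (i + 1) = pathS L η i - 1 := by
  rw [pathS, Finset.sum_range_succ, h, pathS]
  norm_num [sub_eq_add_neg]

theorem pathS_succ_of_false {i : ℕ} (h : ext L η i = false) :
    pathS L η (i + 1) = pathS L η i + 1 := by
  rw [pathS, Finset.sum_range_succ, h, pathS]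
  norm_num

theorem pathS_length : pathS L η L = L - 2 * ones L η := by
  have hones : (ones L η : ℤ) = ∑ j ∈ Finset.range L, if ext L η j = true then 1 else 0 := by
    rw [ones, Finset.sum_range]
    push_cast [apply_ite (Nat.cast : ℕ → ℤ)]
    exact Finset.sum_congr rfl fun i _ => by simp [ext]
  rw [pathS, hones, Finset.sum_sub_distrib, ← Finset.mul_sum]
  simp

theorem pathS_flipAt_of_false {k : ℕ} (hk : k < L) (h : ext L η k = false) (i : ℕ) :
    pathS L (flipAt L η k) i = if k < i then pathS L η i - 2 else pathS L η i := by
  have hstep : ∀ j ∈ Finset.range i,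
      (1 - 2 * (if ext L (flipAt L η k) j = true then 1 else 0) : ℤ)
        = (1 - 2 * (if ext L η j = true then 1 else 0)) - if j = k then 2 else 0 := by
    intro j _
    rw [ext_flipAt η hk]
    by_cases hj : j = k
    · subst hj; simp [h]
    · simp [hj]
  rw [pathS, Finset.sum_congr rfl hstep, Finset.sum_sub_distrib, Finset.sum_ite_eq']
  simp only [Finset.mem_range]
  split_ifs <;> simp [pathS]

theorem pathS_flipAt_of_true {k : ℕ} (h : ext L η k = true) (i : ℕ) :
    pathS L (flipAt L η k) i = if k < i then pathS L η i + 2 else pathS L η i := by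
  have hk := lt_of_ext_eq_true η h
  have hflip : ext L (flipAt L η k) k = false := by simp [ext_flipAt η hk, h]
  have := pathS_flipAt_of_false (flipAt L η k) hk hflip i
  rw [flipAt_flipAt] at this
  split_ifs at this ⊢ <;> omega

theorem ones_flipAt_of_false {k : ℕ} (hk : k < L) (h : ext L η k = false) :
    ones L (flipAt L η k) = ones L η + 1 := by
  have := pathS_flipAt_of_false η hk h L
  rw [if_pos hk, pathS_length, pathS_length] at this
  omega

theorem energy_flipAt {k : ℕ} (hk : k < L) (hnext : ext L η (k + 1) = false)
    (hprev : ∀ j, j + 1 = k → ext L η j = true) :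
    energy L (flipAt L η k) = energy L η := by
  refine Finset.sum_congr rfl fun j _ => ?_
  rw [ext_flipAt η hk, ext_flipAt η hk]
  by_cases hjk : j = k
  · simp [hjk, hnext]
  · by_cases hjk' : j + 1 = k
    · simp [hjk, hjk', hprev j hjk']
    · simp [hjk, hjk']

end Flip

section Minimum

variable {L : ℕ} (η : Fin L → Bool)

theorem neg_eps1_le_pathS {i : ℕ} (hi : i ≤ L) : -eps1 L η ≤ pathS L η i := by
  rw [eps1, neg_neg]
  exact Finset.inf'_le _ (Finset.mem_range.mpr (Nat.lt_succ_of_le hi))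

theorem exists_pathS_eq_neg_eps1 : ∃ i ≤ L, pathS L η i = -eps1 L η := by
  obtain ⟨i, hi, he⟩ := Finset.exists_mem_eq_inf' ⟨0, Finset.mem_range.mpr (Nat.succ_pos L)⟩
    (pathS L η)
  exact ⟨i, Nat.le_of_lt_succ (Finset.mem_range.mp hi), by rw [eps1, neg_neg, he]⟩

theorem eps1_eq_of_pathS_eq {r : ℤ} (hle : ∀ i ≤ L, -r ≤ pathS L η i) {i : ℕ} (hi : i ≤ L)
    (heq : pathS L η i = -r) : eps1 L η = r := by
  obtain ⟨j, hj, hje⟩ := exists_pathS_eq_neg_eps1 η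
  have := neg_eps1_le_pathS η hi
  have := hle j hj
  omega

def lastMinIdx (L : ℕ) (η : Fin L → Bool) : ℕ :=
  Nat.findGreatest (fun i => pathS L η i = -eps1 L η) L

def firstMinIdx (L : ℕ) (η : Fin L → Bool) : ℕ :=
  Nat.find (exists_pathS_eq_neg_eps1 η)

theorem lastMinIdx_le : lastMinIdx L η ≤ L :=
  Nat.findGreatest_le L

theorem pathS_lastMinIdx : pathS L η (lastMinIdx L η) = -eps1 L η := by
  obtain ⟨i, hi, he⟩ := exists_pathS_eq_neg_eps1 η
  exact Nat.findGreatest_spec (P := fun i => pathS L η i = -eps1 L η) hi he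

theorem neg_eps1_lt_pathS_of_lastMinIdx_lt {i : ℕ} (h : lastMinIdx L η < i) (hi : i ≤ L) :
    -eps1 L η < pathS L η i :=
  lt_of_le_of_ne (neg_eps1_le_pathS η hi) (Ne.symm (Nat.findGreatest_is_greatest h hi))

theorem lastMinIdx_lt (h : -eps1 L η < pathS L η L) : lastMinIdx L η < L := by
  refine lt_of_le_of_ne (lastMinIdx_le η) fun hL => h.ne' ?_
  rw [← pathS_lastMinIdx, hL]

theorem lastMinIdx_eq {j : ℕ} (hj : j ≤ L) (heq : pathS L η j = -eps1 L η)
    (hgt : ∀ i, j < i → i ≤ L → -eps1 L η < pathS L η i) : lastMinIdx L η = j := by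
  refine le_antisymm (not_lt.mp fun hlt => ?_) (Nat.le_findGreatest hj heq)
  have := hgt _ hlt (lastMinIdx_le η)
  rw [pathS_lastMinIdx] at this
  exact lt_irrefl _ this

theorem firstMinIdx_le : firstMinIdx L η ≤ L :=
  (Nat.find_spec (exists_pathS_eq_neg_eps1 η)).1

theorem pathS_firstMinIdx : pathS L η (firstMinIdx L η) = -eps1 L η :=
  (Nat.find_spec (exists_pathS_eq_neg_eps1 η)).2

theorem neg_eps1_lt_pathS_of_lt_firstMinIdx {i : ℕ} (h : i < firstMinIdx L η) :
    -eps1 L η < pathS L η i := by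
  have hi : i ≤ L := (h.trans_le (firstMinIdx_le η)).le
  exact lt_of_le_of_ne (neg_eps1_le_pathS η hi) fun he => Nat.find_min _ h ⟨hi, he.symm⟩

theorem firstMinIdx_eq {j : ℕ} (hj : j ≤ L) (heq : pathS L η j = -eps1 L η)
    (hlt : ∀ i < j, -eps1 L η < pathS L η i) : firstMinIdx L η = j := by
  refine le_antisymm (Nat.find_min' _ ⟨hj, heq⟩) (not_lt.mp fun hlt' => ?_)
  have := hlt _ hlt'
  rw [pathS_firstMinIdx] at this
  exact lt_irrefl _ this

end Minimum

def flipAfterLastMin (L : ℕ) (η : Fin L → Bool) : Fin L → Bool :=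
  flipAt L η (lastMinIdx L η)

-- Only meaningful when `0 < eps1 L η`: otherwise `firstMinIdx L η = 0` and `0 - 1 = 0`.
def flipBeforeFirstMin (L : ℕ) (η : Fin L → Bool) : Fin L → Bool :=
  flipAt L η (firstMinIdx L η - 1)

section Raise

variable {L : ℕ} {η : Fin L → Bool} (h : lastMinIdx L η < L)
include h

theorem ext_lastMinIdx : ext L η (lastMinIdx L η) = false := by
  cases hb : ext L η (lastMinIdx L η)
  · rfl
  · have := neg_eps1_le_pathS η (Nat.succ_le_of_lt h)
    rw [pathS_succ_of_true η hb, pathS_lastMinIdx] at this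
    omega

theorem pathS_lastMinIdx_succ : pathS L η (lastMinIdx L η + 1) = -eps1 L η + 1 := by
  rw [pathS_succ_of_false η (ext_lastMinIdx h), pathS_lastMinIdx]

theorem ext_lastMinIdx_succ : ext L η (lastMinIdx L η + 1) = false := by
  cases hb : ext L η (lastMinIdx L η + 1)
  · rfl
  · have := neg_eps1_lt_pathS_of_lastMinIdx_lt η (by omega : lastMinIdx L η < lastMinIdx L η + 2)
      (lt_of_ext_eq_true η hb)
    rw [pathS_succ_of_true η hb, pathS_lastMinIdx_succ h] at this
    omega

theorem ext_of_succ_eq_lastMinIdx {j : ℕ} (hj : j + 1 = lastMinIdx L η) : ext L η j = true := by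
  cases hb : ext L η j
  · have := neg_eps1_le_pathS η (by omega : j ≤ L)
    have hS := pathS_succ_of_false η hb
    rw [hj, pathS_lastMinIdx] at hS
    omega
  · rfl

theorem pathS_flipAfterLastMin (i : ℕ) :
    pathS L (flipAfterLastMin L η) i =
      if lastMinIdx L η < i then pathS L η i - 2 else pathS L η i :=
  pathS_flipAt_of_false η h (ext_lastMinIdx h) i

theorem eps1_flipAfterLastMin : eps1 L (flipAfterLastMin L η) = eps1 L η + 1 := by
  refine eps1_eq_of_pathS_eq _ (fun i hi => ?_) (Nat.succ_le_of_lt h) ?_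
  · rw [pathS_flipAfterLastMin h]
    split_ifs with hlt
    · have := neg_eps1_lt_pathS_of_lastMinIdx_lt η hlt hi
      omega
    · have := neg_eps1_le_pathS η hi
      omega
  · rw [pathS_flipAfterLastMin h, if_pos (Nat.lt_succ_self _), pathS_lastMinIdx_succ h]
    ring

theorem firstMinIdx_flipAfterLastMin :
    firstMinIdx L (flipAfterLastMin L η) = lastMinIdx L η + 1 := by
  refine firstMinIdx_eq _ (Nat.succ_le_of_lt h) ?_ fun i hi => ?_
  · rw [pathS_flipAfterLastMin h, if_pos (Nat.lt_succ_self _), pathS_lastMinIdx_succ h,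
      eps1_flipAfterLastMin h]
    ring
  · rw [pathS_flipAfterLastMin h, if_neg (by omega), eps1_flipAfterLastMin h]
    have := neg_eps1_le_pathS η (by omega : i ≤ L)
    omega

theorem ones_flipAfterLastMin : ones L (flipAfterLastMin L η) = ones L η + 1 :=
  ones_flipAt_of_false η h (ext_lastMinIdx h)

theorem energy_flipAfterLastMin : energy L (flipAfterLastMin L η) = energy L η :=
  energy_flipAt η h (ext_lastMinIdx_succ h) fun _ => ext_of_succ_eq_lastMinIdx h

theorem flipBeforeFirstMin_flipAfterLastMin :
    flipBeforeFirstMin L (flipAfterLastMin L η) = η := by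
  rw [flipBeforeFirstMin, firstMinIdx_flipAfterLastMin h, Nat.add_sub_cancel, flipAfterLastMin,
    flipAt_flipAt]

end Raise

section Lower

variable {L : ℕ} {η : Fin L → Bool} (h : 0 < eps1 L η)
include h

theorem firstMinIdx_pos : 0 < firstMinIdx L η := by
  refine Nat.pos_of_ne_zero fun h0 => ?_
  have := pathS_firstMinIdx η
  rw [h0, pathS_zero] at this
  omega

theorem ext_firstMinIdx_pred : ext L η (firstMinIdx L η - 1) = true := by
  cases hb : ext L η (firstMinIdx L η - 1)
  · have hS := pathS_succ_of_false η hb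
    rw [Nat.sub_add_cancel (firstMinIdx_pos h), pathS_firstMinIdx] at hS
    have := neg_eps1_lt_pathS_of_lt_firstMinIdx η (Nat.sub_lt (firstMinIdx_pos h) one_pos)
    omega
  · rfl

theorem pathS_firstMinIdx_pred : pathS L η (firstMinIdx L η - 1) = -eps1 L η + 1 := by
  have hS := pathS_succ_of_true η (ext_firstMinIdx_pred h)
  rw [Nat.sub_add_cancel (firstMinIdx_pos h), pathS_firstMinIdx] at hS
  omega

theorem pathS_flipBeforeFirstMin (i : ℕ) :
    pathS L (flipBeforeFirstMin L η) i =
      if firstMinIdx L η - 1 < i then pathS L η i + 2 else pathS L η i :=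
  pathS_flipAt_of_true η (ext_firstMinIdx_pred h) i

theorem eps1_flipBeforeFirstMin : eps1 L (flipBeforeFirstMin L η) = eps1 L η - 1 := by
  refine eps1_eq_of_pathS_eq _ (fun i hi => ?_) (i := firstMinIdx L η - 1)
    (by have := firstMinIdx_le η; omega) ?_
  · rw [pathS_flipBeforeFirstMin h]
    split_ifs with hlt
    · have := neg_eps1_le_pathS η hi
      omega
    · have := firstMinIdx_pos h
      have := neg_eps1_lt_pathS_of_lt_firstMinIdx η (by omega : i < firstMinIdx L η)
      omega
  · rw [pathS_flipBeforeFirstMin h, if_neg (lt_irrefl _), pathS_firstMinIdx_pred h]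
    ring

theorem lastMinIdx_flipBeforeFirstMin :
    lastMinIdx L (flipBeforeFirstMin L η) = firstMinIdx L η - 1 := by
  refine lastMinIdx_eq _ (by have := firstMinIdx_le η; omega) ?_ fun i hi hiL => ?_
  · rw [pathS_flipBeforeFirstMin h, if_neg (lt_irrefl _), pathS_firstMinIdx_pred h,
      eps1_flipBeforeFirstMin h]
    ring
  · rw [pathS_flipBeforeFirstMin h, if_pos hi, eps1_flipBeforeFirstMin h]
    have := neg_eps1_le_pathS η hiL
    omega

theorem ones_flipBeforeFirstMin : ones L (flipBeforeFirstMin L η) + 1 = ones L η := by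
  have hb := ext_firstMinIdx_pred h
  have hflip : ext L (flipBeforeFirstMin L η) (firstMinIdx L η - 1) = false := by
    simp [flipBeforeFirstMin, ext_flipAt η (lt_of_ext_eq_true η hb), hb]
  have := ones_flipAt_of_false _ (lt_of_ext_eq_true η hb) hflip
  rwa [flipBeforeFirstMin, flipAt_flipAt, eq_comm] at this

theorem flipAfterLastMin_flipBeforeFirstMin :
    flipAfterLastMin L (flipBeforeFirstMin L η) = η := by
  rw [flipAfterLastMin, lastMinIdx_flipBeforeFirstMin h, flipBeforeFirstMin, flipAt_flipAt]

end Lower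

theorem stmt9_general (L s r : ℕ) (hL : 2 ≤ L) (hs : s ≤ L / 2 - 1) :
    ∃ e : {η : Fin L → Bool // ones L η = s ∧ eps1 L η = (r : ℤ)} ≃
        {η : Fin L → Bool // ones L η = s + 1 ∧ eps1 L η = (r : ℤ) + 1},
      ∀ η, energy L (e η).1 = energy L η.1 := by
  have hlast (η : {η : Fin L → Bool // ones L η = s ∧ eps1 L η = (r : ℤ)}) :
      lastMinIdx L η.1 < L := by
    refine lastMinIdx_lt η.1 ?_
    rw [pathS_length, η.2.1, η.2.2]
    omega
  have hpos (ζ : {η : Fin L → Bool // ones L η = s + 1 ∧ eps1 L η = (r : ℤ) + 1}) :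
      0 < eps1 L ζ.1 := by
    rw [ζ.2.2]
    omega
  refine ⟨⟨fun η => ⟨flipAfterLastMin L η.1, ?_⟩, fun ζ => ⟨flipBeforeFirstMin L ζ.1, ?_⟩,
    fun η => Subtype.ext (flipBeforeFirstMin_flipAfterLastMin (hlast η)),
    fun ζ => Subtype.ext (flipAfterLastMin_flipBeforeFirstMin (hpos ζ))⟩,
    fun η => energy_flipAfterLastMin (hlast η)⟩
  · rw [ones_flipAfterLastMin (hlast η), eps1_flipAfterLastMin (hlast η), η.2.1, η.2.2]
    exact ⟨rfl, rfl⟩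
  · have := ones_flipBeforeFirstMin (hpos ζ)
    rw [eps1_flipBeforeFirstMin (hpos ζ), ζ.2.2]
    exact ⟨by omega, by ring⟩

/-- For `L ≥ 2`, `0 ≤ s ≤ ⌊L/2⌋ - 1` and `0 ≤ r ≤ s`, there is an energy
preserving bijection between `{η ∈ {0,1}^L : |η| = s, ε₁(η) = r}` and
`{η ∈ {0,1}^L : |η| = s+1, ε₁(η) = r+1}`. -/
theorem stmt9 (L s r : ℕ) (hL : 2 ≤ L) (hs : s ≤ L / 2 - 1) (hr : r ≤ s) :
    ∃ e : {η : Fin L → Bool // ones L η = s ∧ eps1 L η = (r : ℤ)} ≃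
        {η : Fin L → Bool // ones L η = s + 1 ∧ eps1 L η = (r : ℤ) + 1},
      ∀ η, energy L (e η).1 = energy L η.1 :=
  stmt9_general L s r hL hs
end

section
/- For nonnegative integers n and a ∈ {0,1}, there is a size-preserving bijection between the set of partitions with at most n parts, and the Cartesian product of (partitions with at most n parts and each part at most n+a) with (partitions each of whose parts lies in the interval [n+a+1, 2n+a]), where size-preserving means |ν| = |λ| + |μ| under ν ↦ (λ, μ). -/
/-!
Write `G(S) = ∑_N #{partitions of N whose multiset of parts lies in S} q^N`. Two families of
positive multisets admit a size-preserving bijection as soon as they have equally many members of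
each size, so it suffices to show, for every `m`,
  `G(≤ n parts) = G(n × m box) · G(parts in (m, m + n])`,
i.e. `1 / ∏_{i ≤ n} (1 - q^i) = [n+m choose n]_q / ∏_{i ≤ n} (1 - q^{m+i})`.
This follows by induction on `n` from three recurrences, obtained by removing either the first
column of a partition with exactly `n + 1` parts or one part equal to `m + 1`. A double induction
on the box recurrence gives `[n+m+1 choose n]_q (1 - q^{m+1}) = [n+m+1 choose n+1]_q (1 - q^{n+1})`,
which is what closes the inductive step.
-/

open Multiset PowerSeries

namespace PartitionCount

noncomputable def genSeries (S : Set (Multiset ℕ)) : ℤ⟦X⟧ :=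
  PowerSeries.mk fun N => Nat.card {p : N.Partition // p.parts ∈ S}

lemma coeff_genSeries (S : Set (Multiset ℕ)) (N : ℕ) :
    coeff N (genSeries S) = Nat.card {p : N.Partition // p.parts ∈ S} :=
  coeff_mk _ _

lemma genSeries_union {S T : Set (Multiset ℕ)} (h : Disjoint S T) :
    genSeries (S ∪ T) = genSeries S + genSeries T := by
  classical
  ext N
  rw [_root_.map_add, coeff_genSeries, coeff_genSeries, coeff_genSeries, ← Nat.cast_add]
  exact congrArg _ <| (Nat.card_congr (Equiv.Set.union (h.preimage Nat.Partition.parts))).trans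
    Nat.card_sum

lemma genSeries_image {S : Set (Multiset ℕ)} {f : Multiset ℕ → Multiset ℕ} {k : ℕ}
    (hf : S.InjOn f) (hpos : ∀ ν ∈ S, (∀ x ∈ f ν, 0 < x) ↔ ∀ x ∈ ν, 0 < x)
    (hsum : ∀ ν ∈ S, (f ν).sum = ν.sum + k) :
    genSeries (f '' S) = X ^ k * genSeries S := by
  ext N
  rw [coeff_X_pow_mul', coeff_genSeries]
  have hsize {q : N.Partition} {ν : Multiset ℕ} (hν : ν ∈ S) (hq : q.parts = f ν) :
      ν.sum + k = N := by
    rw [← hsum ν hν, ← hq, q.parts_sum]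
  split_ifs with hk
  · rw [coeff_genSeries, Nat.cast_inj]
    let φ (p : {p : (N - k).Partition // p.parts ∈ S}) :
        {q : N.Partition // q.parts ∈ f '' S} :=
      ⟨⟨f p.1.parts, fun hx => (hpos _ p.2).2 (fun _ => p.1.parts_pos) _ hx,
        by rw [hsum _ p.2, p.1.parts_sum, Nat.sub_add_cancel hk]⟩, Set.mem_image_of_mem f p.2⟩
    refine (Nat.card_eq_of_bijective φ ⟨fun p q hpq => ?_, ?_⟩).symm
    · exact Subtype.ext (Nat.Partition.ext (hf p.2 q.2 (congrArg (·.1.parts) hpq)))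
    · rintro ⟨q, ν, hν, hq⟩
      have hνpos := (hpos ν hν).1 (hq ▸ fun _ => q.parts_pos)
      have := hsize hν hq.symm
      exact ⟨⟨⟨ν, fun hx => hνpos _ hx, by omega⟩, hν⟩,
        Subtype.ext (Nat.Partition.ext hq)⟩
  · rw [Nat.cast_eq_zero, Nat.card_eq_zero]
    exact Or.inl ⟨fun ⟨q, ν, hν, hq⟩ => hk (hsize hν hq.symm ▸ Nat.le_add_left k _)⟩

lemma genSeries_singleton_zero : genSeries {0} = 1 := by
  ext N
  rw [coeff_genSeries, coeff_one]
  split_ifs with hN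
  · subst hN
    rw [Nat.cast_eq_one, Nat.card_eq_one_iff_unique]
    exact ⟨⟨fun p q => Subtype.ext (Nat.Partition.ext (p.2.trans q.2.symm))⟩,
      ⟨⟨⟨0, fun h => absurd h (notMem_zero _), rfl⟩, rfl⟩⟩⟩
  · rw [Nat.cast_eq_zero, Nat.card_eq_zero]
    exact Or.inl ⟨fun p => hN <| by
      rw [← p.1.parts_sum, Set.mem_singleton_iff.1 p.2, sum_zero]⟩

lemma genSeries_eq_add_X_pow_mul {k : ℕ} (hk : 0 < k) (S : Set (Multiset ℕ)) :
    genSeries S = genSeries {ν ∈ S | k ∉ ν} + X ^ k * genSeries {ν | k ::ₘ ν ∈ S} := by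
  have hsplit : S = {ν ∈ S | k ∉ ν} ∪ (k ::ₘ ·) '' {ν | k ::ₘ ν ∈ S} := by
    ext ν
    constructor
    · intro hν
      by_cases hkν : k ∈ ν
      · exact Or.inr ⟨ν.erase k, by rwa [Set.mem_ofPred_eq, cons_erase hkν], cons_erase hkν⟩
      · exact Or.inl ⟨hν, hkν⟩
    · rintro (hν | ⟨μ, hμ, rfl⟩)
      exacts [hν.1, hμ]
  have hdisj : Disjoint {ν ∈ S | k ∉ ν} ((k ::ₘ ·) '' {ν | k ::ₘ ν ∈ S}) :=
    Set.disjoint_left.2 fun _ hν ⟨μ, _, hμ⟩ => hν.2 (hμ ▸ mem_cons_self k μ)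
  conv_lhs => rw [hsplit]
  rw [genSeries_union hdisj, genSeries_image (fun _ _ _ _ h => (cons_inj_right k).1 h)
    (fun ν _ => by simp [hk]) (fun ν _ => by rw [sum_cons, add_comm])]

def lengthLE (n : ℕ) : Set (Multiset ℕ) := {ν | card ν ≤ n ∧ ∀ x ∈ ν, 0 < x}

def box (n m : ℕ) : Set (Multiset ℕ) := {ν | card ν ≤ n ∧ ∀ x ∈ ν, 0 < x ∧ x ≤ m}

def partsIoc (m k : ℕ) : Set (Multiset ℕ) := {ν | ∀ x ∈ ν, m < x ∧ x ≤ k}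

def addColumn (n : ℕ) (ν : Multiset ℕ) : Multiset ℕ :=
  ν.map (· + 1) + replicate (n - card ν) 1

def removeColumn (ν : Multiset ℕ) : Multiset ℕ := (ν.map (· - 1)).filter (· ≠ 0)

section Columns

variable {n : ℕ} {ν : Multiset ℕ}

lemma pos_of_mem_addColumn {x : ℕ} (hx : x ∈ addColumn n ν) : 0 < x := by
  rcases mem_add.1 hx with hx | hx
  · obtain ⟨y, -, rfl⟩ := mem_map.1 hx
    exact y.succ_pos
  · rw [eq_of_mem_replicate hx]
    exact one_pos

lemma card_addColumn (h : card ν ≤ n) : card (addColumn n ν) = n := by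
  rw [addColumn, card_add, card_map, card_replicate]
  omega

lemma sum_addColumn (h : card ν ≤ n) : (addColumn n ν).sum = ν.sum + n := by
  rw [addColumn, sum_add, sum_map_add, map_const', sum_replicate, sum_replicate, smul_eq_mul,
    smul_eq_mul, mul_one, mul_one, map_id']
  omega

lemma removeColumn_addColumn (hν : ∀ x ∈ ν, 0 < x) : removeColumn (addColumn n ν) = ν := by
  have hfilter : ν.filter (· ≠ 0) = ν := filter_eq_self.2 fun x hx => (hν x hx).ne'
  simpa [removeColumn, addColumn, hfilter] using fun _ => eq_of_mem_replicate

lemma addColumn_removeColumn (hν : ∀ x ∈ ν, 0 < x) (hcard : card ν = n) :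
    addColumn n (removeColumn ν) = ν := by
  set s := ν.map (· - 1)
  have hs : s.map (· + 1) = ν := by
    rw [map_map]
    conv_rhs => rw [← map_id ν]
    exact map_congr rfl fun x hx => Nat.sub_add_cancel (hν x hx)
  have hsplit : removeColumn ν + replicate (count 0 s) 0 = s :=
    calc removeColumn ν + replicate (count 0 s) 0
        _ = s.filter (· ≠ 0) + s.filter (¬ · ≠ 0) := by
          rw [removeColumn, ← filter_eq']
          exact congrArg _ (filter_congr fun x _ => not_not.symm)
        _ = s := filter_add_not _ _
  have hcount : n - card (removeColumn ν) = count 0 s := by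
    have := congrArg card hsplit
    rw [card_add, card_replicate, card_map, hcard] at this
    omega
  rw [addColumn, hcount]
  conv_rhs => rw [← hs, ← hsplit, Multiset.map_add, map_replicate]

lemma card_removeColumn_le : card (removeColumn ν) ≤ card ν :=
  (card_le_card (filter_le _ _)).trans (card_map _ _).le

lemma pos_of_mem_removeColumn {x : ℕ} (hx : x ∈ removeColumn ν) : 0 < x :=
  Nat.pos_of_ne_zero (mem_filter.1 hx).2

end Columns

lemma lengthLE_zero : lengthLE 0 = {0} := by
  ext ν
  simp +contextual [lengthLE]

lemma box_zero_left (m : ℕ) : box 0 m = {0} := by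
  ext ν
  simp +contextual [box]

lemma box_zero_right (n : ℕ) : box n 0 = {0} := by
  ext ν
  refine ⟨fun h => eq_zero_of_forall_notMem fun x hx => ?_, fun h => ?_⟩
  · have := h.2 x hx
    omega
  · simp [Set.mem_singleton_iff.1 h, box]

lemma partsIoc_self (m : ℕ) : partsIoc m m = {0} := by
  ext ν
  refine ⟨fun h => eq_zero_of_forall_notMem fun x hx => ?_, fun h => ?_⟩
  · have := h x hx
    omega
  · simp [Set.mem_singleton_iff.1 h, partsIoc]

lemma genSeries_lengthLE_succ (n : ℕ) :
    genSeries (lengthLE (n + 1)) =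
      genSeries (lengthLE n) + X ^ (n + 1) * genSeries (lengthLE (n + 1)) := by
  have hsplit : lengthLE (n + 1) = lengthLE n ∪ addColumn (n + 1) '' lengthLE (n + 1) := by
    ext ν
    constructor
    · rintro ⟨hcard, hpos⟩
      rcases hcard.lt_or_eq with hlt | heq
      · exact Or.inl ⟨Nat.lt_succ_iff.1 hlt, hpos⟩
      · exact Or.inr ⟨removeColumn ν, ⟨card_removeColumn_le.trans hcard,
          fun _ => pos_of_mem_removeColumn⟩, addColumn_removeColumn hpos heq⟩
    · rintro (⟨hcard, hpos⟩ | ⟨μ, hμ, rfl⟩)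
      · exact ⟨hcard.trans n.le_succ, hpos⟩
      · exact ⟨(card_addColumn hμ.1).le, fun _ => pos_of_mem_addColumn⟩
  have hdisj : Disjoint (lengthLE n) (addColumn (n + 1) '' lengthLE (n + 1)) :=
    Set.disjoint_left.2 fun ν hν ⟨μ, hμ, hμν⟩ => by
      have := hν.1
      rw [← hμν, card_addColumn hμ.1] at this
      omega
  conv_lhs => rw [hsplit]
  rw [genSeries_union hdisj, genSeries_image
    (fun μ hμ μ' hμ' h => by
      rw [← removeColumn_addColumn (n := n + 1) hμ.2, h, removeColumn_addColumn hμ'.2])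
    (fun μ hμ => ⟨fun _ => hμ.2, fun _ _ => pos_of_mem_addColumn⟩)
    (fun μ hμ => sum_addColumn hμ.1)]

lemma genSeries_box_succ_succ (n m : ℕ) :
    genSeries (box (n + 1) (m + 1)) =
      genSeries (box (n + 1) m) + X ^ (m + 1) * genSeries (box n (m + 1)) := by
  have hfree : {ν ∈ box (n + 1) (m + 1) | m + 1 ∉ ν} = box (n + 1) m := by
    ext ν
    constructor
    · rintro ⟨⟨hcard, hbound⟩, hm⟩
      exact ⟨hcard, fun x hx => ⟨(hbound x hx).1,
        Nat.le_of_lt_succ ((hbound x hx).2.lt_of_ne (ne_of_mem_of_not_mem hx hm))⟩⟩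
    · rintro ⟨hcard, hbound⟩
      exact ⟨⟨hcard, fun x hx => ⟨(hbound x hx).1, (hbound x hx).2.trans m.le_succ⟩⟩,
        fun hm => (hbound _ hm).2.not_gt m.lt_succ_self⟩
  have hcons : {ν | (m + 1) ::ₘ ν ∈ box (n + 1) (m + 1)} = box n (m + 1) := by
    ext ν
    simp [box]
  rw [genSeries_eq_add_X_pow_mul m.add_one_pos, hfree, hcons]

lemma genSeries_partsIoc_of_lt {m k : ℕ} (h : m < k) :
    genSeries (partsIoc m k) =
      genSeries (partsIoc (m + 1) k) + X ^ (m + 1) * genSeries (partsIoc m k) := by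
  have hfree : {ν ∈ partsIoc m k | m + 1 ∉ ν} = partsIoc (m + 1) k := by
    ext ν
    constructor
    · rintro ⟨hbound, hm⟩ x hx
      exact ⟨lt_of_le_of_ne (hbound x hx).1 (ne_of_mem_of_not_mem hx hm).symm, (hbound x hx).2⟩
    · intro hbound
      exact ⟨fun x hx => ⟨m.lt_succ_self.trans (hbound x hx).1, (hbound x hx).2⟩,
        fun hm => (hbound _ hm).1.false⟩
  have hcons : {ν | (m + 1) ::ₘ ν ∈ partsIoc m k} = partsIoc m k := by
    ext ν
    simp [partsIoc, h]
  nth_rewrite 1 [genSeries_eq_add_X_pow_mul m.add_one_pos]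
  rw [hfree, hcons]

lemma genSeries_box_mul_one_sub (n m : ℕ) :
    genSeries (box n (m + 1)) * (1 - X ^ (m + 1)) =
      genSeries (box (n + 1) m) * (1 - X ^ (n + 1)) := by
  induction n generalizing m with
  | zero =>
    induction m with
    | zero => simp [box_zero_left, box_zero_right, genSeries_singleton_zero]
    | succ m ih =>
      have hrec := genSeries_box_succ_succ 0 m
      rw [box_zero_left, genSeries_singleton_zero] at hrec ih ⊢
      linear_combination ih - (1 - X) * hrec
  | succ n ihn =>
    induction m with
    | zero =>
      have hrec := genSeries_box_succ_succ n 0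
      have h0 := ihn 0
      rw [box_zero_right, genSeries_singleton_zero] at hrec h0 ⊢
      linear_combination (1 - X) * hrec + X * h0
    | succ m ihm =>
      linear_combination (1 - X ^ (m + 2)) * genSeries_box_succ_succ n (m + 1)
        + X ^ (m + 2) * ihn (m + 1) - (1 - X ^ (n + 2)) * genSeries_box_succ_succ (n + 1) m + ihm

lemma one_sub_X_pow_ne_zero (k : ℕ) : (1 - X ^ (k + 1) : ℤ⟦X⟧) ≠ 0 := fun h => by
  simpa using congrArg constantCoeff h

theorem genSeries_lengthLE_eq_mul (n m : ℕ) :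
    genSeries (lengthLE n) = genSeries (box n m) * genSeries (partsIoc m (n + m)) := by
  induction n generalizing m with
  | zero => simp [lengthLE_zero, box_zero_left, partsIoc_self, genSeries_singleton_zero]
  | succ n ih =>
    have hA := genSeries_lengthLE_succ n
    have hD := genSeries_partsIoc_of_lt (m := m) (k := n + 1 + m) (by omega)
    rw [show n + 1 + m = n + (m + 1) by omega] at hD ⊢
    apply mul_left_cancel₀ (one_sub_X_pow_ne_zero n)
    linear_combination hA + ih (m + 1) - genSeries (box n (m + 1)) * hD
      + genSeries (partsIoc m (n + (m + 1))) * genSeries_box_mul_one_sub n m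

def sumFiberEquiv {S : Set (Multiset ℕ)} (hS : ∀ ν ∈ S, ∀ x ∈ ν, 0 < x) (N : ℕ) :
    {ν : S // ν.1.sum = N} ≃ {p : N.Partition // p.parts ∈ S} where
  toFun ν := ⟨⟨ν.1.1, fun hx => hS _ ν.1.2 _ hx, ν.2⟩, ν.1.2⟩
  invFun p := ⟨⟨p.1.parts, p.2⟩, p.1.parts_sum⟩

def prodFiberEquiv {α β : Type*} (f : α → ℕ) (g : β → ℕ) (N : ℕ) :
    {p : α × β // f p.1 + g p.2 = N} ≃
      Σ q : Finset.HasAntidiagonal.antidiagonal N, {a // f a = q.1.1} × {b // g b = q.1.2} where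
  toFun p := ⟨⟨(f p.1.1, g p.1.2), Finset.HasAntidiagonal.mem_antidiagonal.2 p.2⟩,
    ⟨p.1.1, rfl⟩, ⟨p.1.2, rfl⟩⟩
  invFun x := ⟨(x.2.1.1, x.2.2.1), by
    rw [x.2.1.2, x.2.2.2]
    exact Finset.HasAntidiagonal.mem_antidiagonal.1 x.1.2⟩
  right_inv := by
    rintro ⟨⟨⟨i, j⟩, hij⟩, ⟨a, ha⟩, ⟨b, hb⟩⟩
    dsimp only at ha hb
    subst ha hb
    rfl

theorem exists_sum_equiv_prod_of_genSeries_eq_mul {S T U : Set (Multiset ℕ)}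
    (hS : ∀ ν ∈ S, ∀ x ∈ ν, 0 < x) (hT : ∀ ν ∈ T, ∀ x ∈ ν, 0 < x)
    (hU : ∀ ν ∈ U, ∀ x ∈ ν, 0 < x)
    (h : genSeries S = genSeries T * genSeries U) :
    ∃ e : S ≃ T × U, ∀ ν, ν.1.sum = (e ν).1.1.sum + (e ν).2.1.sum := by
  have hfinite {V : Set (Multiset ℕ)} (hV : ∀ ν ∈ V, ∀ x ∈ ν, 0 < x) (N : ℕ) :
      Finite {ν : V // ν.1.sum = N} :=
    Finite.of_equiv _ (sumFiberEquiv hV N).symm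
  have := hfinite hT
  have := hfinite hU
  have hcard (N : ℕ) : Nat.card {ν : S // ν.1.sum = N} =
      Nat.card {p : T × U // p.1.1.sum + p.2.1.sum = N} := by
    have hN := congrArg (coeff N) h
    simp only [coeff_mul, coeff_genSeries] at hN
    rw [Nat.card_congr (sumFiberEquiv hS N),
      Nat.card_congr (prodFiberEquiv (fun t : T => t.1.sum) (fun u : U => u.1.sum) N),
      Nat.card_sigma, Finset.sum_coe_sort (Finset.HasAntidiagonal.antidiagonal N)
        (fun q => Nat.card ({a : T // a.1.sum = q.1} × {b : U // b.1.sum = q.2}))]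
    simp only [Nat.card_prod, Nat.card_congr (sumFiberEquiv hT _),
      Nat.card_congr (sumFiberEquiv hU _)]
    exact_mod_cast hN
  have := hfinite hS
  have hfiber (N : ℕ) : Finite {p : T × U // p.1.1.sum + p.2.1.sum = N} :=
    Finite.of_equiv _ (prodFiberEquiv (fun t : T => t.1.sum) (fun u : U => u.1.sum) N).symm
  let e := fun N => (Finite.card_eq.1 (hcard N)).some
  exact ⟨Equiv.ofFiberEquiv e, fun ν => (Equiv.ofFiberEquiv_map e ν).symm⟩

end PartitionCount

theorem stmt11_general (n a : ℕ) :
    ∃ e : {ν : Multiset ℕ // ν.card ≤ n ∧ ∀ x ∈ ν, 0 < x} ≃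
        {lam : Multiset ℕ // lam.card ≤ n ∧ ∀ x ∈ lam, 0 < x ∧ x ≤ n + a} ×
          {μ : Multiset ℕ // ∀ x ∈ μ, n + a < x ∧ x ≤ 2 * n + a},
      ∀ ν, ν.1.sum = ((e ν).1).1.sum + ((e ν).2).1.sum := by
  have h := PartitionCount.genSeries_lengthLE_eq_mul n (n + a)
  rw [show n + (n + a) = 2 * n + a by omega] at h
  exact PartitionCount.exists_sum_equiv_prod_of_genSeries_eq_mul (fun _ hν => hν.2)
    (fun _ hν x hx => (hν.2 x hx).1) (fun _ hν x hx => Nat.zero_lt_of_lt (hν x hx).1) h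

/-- For `a ∈ {0,1}`, there is a size-preserving bijection between the partitions
with at most `n` parts and the product of (partitions with at most `n` parts, each
part at most `n + a`) with (partitions all of whose parts lie in `[n+a+1, 2n+a]`),
partitions being encoded as multisets of positive integers. -/
theorem stmt11 (n a : ℕ) (ha : a ≤ 1) :
    ∃ e : {ν : Multiset ℕ // ν.card ≤ n ∧ ∀ x ∈ ν, 0 < x} ≃
        {lam : Multiset ℕ // lam.card ≤ n ∧ ∀ x ∈ lam, 0 < x ∧ x ≤ n + a} ×
          {μ : Multiset ℕ // ∀ x ∈ μ, n + a < x ∧ x ≤ 2 * n + a},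
      ∀ ν, ν.1.sum = ((e ν).1).1.sum + ((e ν).2).1.sum :=
  stmt11_general n a
end

section
/- For the partition λ = (2^s, 1^{L-2s}) with 0 ≤ 2s ≤ L, the hook-length polynomial satisfies H_λ(q) = (q;q)_s (q;q)_{L-s+1} / (1 - q^{L-2s+1}). -/
open PowerSeries Finset

/-- Row lengths (0-indexed) of the partition `λ = (2^s, 1^{L-2s})`. -/
def rowLen (L s i : ℕ) : ℕ := if i < s then 2 else if i < L - s then 1 else 0

/-- Column lengths of `λ = (2^s, 1^{L-2s})`. -/
def colLen (L s j : ℕ) : ℕ :=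
  ((Finset.range (L - s)).filter (fun i => j < rowLen L s i)).card

/-- The hook length of the cell `(i, j)` (0-indexed) of `λ = (2^s, 1^{L-2s})`. -/
def hookLen (L s i j : ℕ) : ℕ := (rowLen L s i - j) + (colLen L s j - i) - 1

/-- The hook-length polynomial `H_λ(q) = ∏_{x ∈ λ} (1 - q^{h(x)})` for
`λ = (2^s, 1^{L-2s})`. -/
noncomputable def Hpoly (L s : ℕ) : PowerSeries ℚ :=
  ∏ i ∈ Finset.range (L - s), ∏ j ∈ Finset.range (rowLen L s i),
    (1 - (X : PowerSeries ℚ) ^ (hookLen L s i j))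

lemma col0 (s m : ℕ) : colLen (2 * s + m) s 0 = s + m := by
  unfold colLen rowLen
  rw [Finset.filter_true_of_mem]
  · rw [Finset.card_range]; omega
  · intro i hi
    simp only [Finset.mem_range] at hi
    split_ifs <;> omega

lemma col1 (s m : ℕ) : colLen (2 * s + m) s 1 = s := by
  have h1 : (2 * s + m) - s = s + m := by omega
  unfold colLen rowLen
  rw [h1]
  have : ((range (s + m)).filter fun i =>
      1 < if i < s then 2 else if i < s + m then 1 else 0) = range s := by
    ext i
    simp only [Finset.mem_filter, Finset.mem_range]
    constructor
    · rintro ⟨hi, h2⟩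
      by_contra hc
      rw [if_neg (by omega)] at h2
      split at h2 <;> omega
    · intro hi
      refine ⟨by omega, ?_⟩
      rw [if_pos hi]; omega
  rw [this, Finset.card_range]

lemma hook_a (s m i : ℕ) (hi : i < s) :
    hookLen (2 * s + m) s i 0 = s + m + 1 - i := by
  unfold hookLen
  rw [col0, rowLen, if_pos hi]
  omega

lemma hook_b (s m i : ℕ) (hi : i < s) :
    hookLen (2 * s + m) s i 1 = s - i := by
  unfold hookLen
  rw [col1, rowLen, if_pos hi]
  omega

lemma hook_c (s m t : ℕ) (ht : t < m) :
    hookLen (2 * s + m) s (s + t) 0 = m - t := by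
  unfold hookLen
  rw [col0, rowLen, if_neg (by omega), if_pos (by omega)]
  omega

lemma key (s m : ℕ) :
    Hpoly (2 * s + m) s * (1 - (X : PowerSeries ℚ) ^ (m + 1)) =
      qPoch s * qPoch (s + m + 1) := by
  have hLs : (2 * s + m) - s = s + m := by omega
  unfold Hpoly
  rw [hLs, Finset.prod_range_add]
  have h1 : ∀ i ∈ range s, (∏ j ∈ Finset.range (rowLen (2 * s + m) s i),
      (1 - (X : PowerSeries ℚ) ^ (hookLen (2 * s + m) s i j))) =
      (1 - (X : PowerSeries ℚ) ^ (s + m + 1 - i)) * (1 - (X : PowerSeries ℚ) ^ (s - i)) := by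
    intro i hi
    simp only [Finset.mem_range] at hi
    rw [rowLen, if_pos hi]
    rw [Finset.prod_range_succ, Finset.prod_range_one, hook_a s m i hi, hook_b s m i hi]
  have h2 : ∀ t ∈ range m, (∏ j ∈ Finset.range (rowLen (2 * s + m) s (s + t)),
      (1 - (X : PowerSeries ℚ) ^ (hookLen (2 * s + m) s (s + t) j))) =
      (1 - (X : PowerSeries ℚ) ^ (m - t)) := by
    intro t ht
    simp only [Finset.mem_range] at ht
    rw [rowLen, if_neg (by omega), if_pos (by omega)]
    rw [Finset.prod_range_one, hook_c s m t ht]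
  rw [Finset.prod_congr rfl h1, Finset.prod_congr rfl h2]
  rw [Finset.prod_mul_distrib]
  have e1 : (∏ i ∈ range s, (1 - (X : PowerSeries ℚ) ^ (s - i))) = qPoch s := by
    rw [qPoch, ← Finset.prod_range_reflect]
    refine Finset.prod_congr rfl fun i hi => ?_
    simp only [Finset.mem_range] at hi
    congr 2
    omega
  have e2 : (∏ t ∈ range m, (1 - (X : PowerSeries ℚ) ^ (m - t))) = qPoch m := by
    rw [qPoch, ← Finset.prod_range_reflect]
    refine Finset.prod_congr rfl fun i hi => ?_
    simp only [Finset.mem_range] at hi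
    congr 2
    omega
  have e3 : (∏ i ∈ range s, (1 - (X : PowerSeries ℚ) ^ (s + m + 1 - i))) =
      ∏ i ∈ range s, (1 - (X : PowerSeries ℚ) ^ (m + 1 + (i + 1))) := by
    rw [← Finset.prod_range_reflect]
    refine Finset.prod_congr rfl fun i hi => ?_
    simp only [Finset.mem_range] at hi
    congr 2
    omega
  have e4 : qPoch (s + m + 1) = qPoch m * (1 - (X : PowerSeries ℚ) ^ (m + 1)) *
      ∏ i ∈ range s, (1 - (X : PowerSeries ℚ) ^ (m + 1 + (i + 1))) := by
    have : s + m + 1 = (m + 1) + s := by omega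
    rw [qPoch, this, Finset.prod_range_add, qPoch, Finset.prod_range_succ]
    rfl
  rw [e1, e2, e3, e4]
  ring

/-- For `λ = (2^s, 1^{L-2s})` with `0 ≤ 2s ≤ L`, the hook-length polynomial
satisfies `H_λ(q) = (q;q)_s (q;q)_{L-s+1} / (1 - q^{L-2s+1})`. -/
theorem stmt15 (L s : ℕ) (h : 2 * s ≤ L) :
    Hpoly L s = qPoch s * qPoch (L - s + 1) *
      (1 - (X : PowerSeries ℚ) ^ (L - 2 * s + 1))⁻¹ := by
  obtain ⟨m, rfl⟩ : ∃ m, L = 2 * s + m := ⟨L - 2 * s, by omega⟩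
  have h1 : 2 * s + m - s + 1 = s + m + 1 := by omega
  have h2 : 2 * s + m - 2 * s + 1 = m + 1 := by omega
  rw [h1, h2, PowerSeries.eq_mul_inv_iff_mul_eq, key]
  simp
end
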